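/- Under the Tree-to-Path construction, if the root r has label l(r) = 1, the output is a directed Hamiltonian path P with Beg(P) = max(C(r)) and End(P) = r. -/

import Mathlib

variable {V : Type*}

/-- Children of `v` under parent map `p` with root `r`. -/
def t2pChild [Fintype V] [LinearOrder V] (r : V) (p : V → V) (v : V) : Finset V :=
  Finset.univ.filter (fun u => u ≠ r ∧ p u = v)

/-- Siblings of `v` greater than `v`. -/
def t2pRSib [Fintype V] [LinearOrder V] (r : V) (p : V → V) (v : V) : Finset V :=
  (t2pChild r p (p v)).filter (fun w => v < w)

/-- Siblings of `v` smaller than `v`. -/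
def t2pLSib [Fintype V] [LinearOrder V] (r : V) (p : V → V) (v : V) : Finset V :=
  (t2pChild r p (p v)).filter (fun w => w < v)

/-- The directed edge added by the Tree-to-Path algorithm for a non-root vertex `v`,
where `l` is the label function (only its parity matters). -/
def t2pEdge [Fintype V] [LinearOrder V] (r : V) (p : V → V) (l : V → ℕ) (v : V) : V × V :=
  if l v % 2 = 1 then
    (if h : (t2pRSib r p v).Nonempty then (t2pRSib r p v).min' h else p v,
     if h : (t2pChild r p v).Nonempty then (t2pChild r p v).max' h else v)
  else
    (if h : (t2pChild r p v).Nonempty then (t2pChild r p v).min' h else v,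
     if h : (t2pLSib r p v).Nonempty then (t2pLSib r p v).max' h else p v)

/-!
The edges produced by the algorithm are exactly the consecutive pairs of a depth-first traversal
of the tree in which children are visited in decreasing order, vertices of odd depth (label 0)
before their subtrees and vertices of even depth (label 1) after them. For `v ≠ r` of even depth
the edge of `v` enters the subtree of `v`: it joins the vertex just before that subtree (the next
greater sibling, which closes its own subtree, or else the parent) to the first vertex of the
subtree (the greatest child of `v`, or `v` itself). For `v` of odd depth the edge leaves the subtree
of `v`, joining its last vertex to the vertex just after it. The traversal starts at the greatest
child of `r` and ends at `r`.
-/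

open Function

theorem List.IsPrefix.of_lt_of_lt {α : Type*} [Preorder α] :
    ∀ {P l₁ l l₂ : List α}, P <+: l₁ → P <+: l₂ → l₁ < l → l < l₂ → P <+: l
  | [], _, _, _, _, _, _, _ => List.nil_prefix
  | _ :: _, [], _, _, h₁, _, _, _ => absurd h₁ (by simp)
  | _ :: _, _ :: _, [], _, _, _, hl₁, _ => absurd hl₁ (List.not_lt_nil _)
  | _ :: _, _ :: _, _ :: _, [], _, h₂, _, _ => absurd h₂ (by simp)
  | a :: P, _ :: _, _ :: _, _ :: _, h₁, h₂, hl₁, hl₂ => by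
    obtain ⟨rfl, hP₁⟩ := List.cons_prefix_cons.1 h₁
    obtain ⟨rfl, hP₂⟩ := List.cons_prefix_cons.1 h₂
    rw [List.cons_lt_cons_iff] at hl₁ hl₂
    rcases hl₁ with hab | ⟨rfl, hl₁⟩
    · rcases hl₂ with hba | hba
      · exact absurd (hab.trans hba) (lt_irrefl a)
      · exact absurd (hba.1 ▸ hab) (lt_irrefl a)
    · rcases hl₂ with hba | ⟨-, hl₂⟩
      · exact absurd hba (lt_irrefl a)
      · exact List.cons_prefix_cons.2 ⟨rfl, hP₁.of_lt_of_lt hP₂ hl₁ hl₂⟩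

theorem List.append_cons_lt_append_cons {α : Type*} [LT α] (s : List α) {a b : α} (h : a < b)
    (t₁ t₂ : List α) : s ++ a :: t₁ < s ++ b :: t₂ :=
  List.Lex.append_left _ (List.Lex.rel h) s

section CovByUnder

variable {α β : Type*} [LinearOrder β] {g : α → β}

def CovByUnder (g : α → β) (a b : α) : Prop :=
  g a < g b ∧ ∀ c, g a < g c → g b ≤ g c

theorem CovByUnder.right_unique (hg : Injective g) {a b b' : α} (h : CovByUnder g a b)
    (h' : CovByUnder g a b') : b = b' :=
  hg (le_antisymm (h.2 b' h'.1) (h'.2 b h.1))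

theorem exists_equiv_fin_strictMono_comp [Fintype α] (hg : Injective g) :
    ∃ f : Fin (Fintype.card α) ≃ α, StrictMono (g ∘ f) :=
  letI : LinearOrder α := LinearOrder.lift' g hg
  let e := Fintype.orderIsoFinOfCardEq α rfl
  ⟨e.toEquiv, e.strictMono⟩

variable {n : ℕ} (f : Fin n ≃ α)

theorem Equiv.apply_zero_eq_of_forall_le (hf : StrictMono (g ∘ f)) (h0 : 0 < n) {m : α}
    (hm : ∀ c, g m ≤ g c) :
    f ⟨0, h0⟩ = m := by
  have h : (f.symm m : ℕ) ≤ 0 :=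
    (hf.le_iff_le (a := f.symm m) (b := ⟨0, h0⟩)).1 (by simpa using hm _)
  rw [← f.apply_symm_apply m]
  exact congrArg f (Fin.ext (Nat.le_zero.1 h).symm)

theorem Equiv.apply_last_eq_of_forall_le (hf : StrictMono (g ∘ f)) (h : n - 1 < n) {m : α}
    (hm : ∀ c, g c ≤ g m) :
    f ⟨n - 1, h⟩ = m := by
  have h' : n - 1 ≤ (f.symm m : ℕ) :=
    (hf.le_iff_le (a := ⟨n - 1, h⟩) (b := f.symm m)).1 (by simpa using hm _)
  rw [← f.apply_symm_apply m]
  exact congrArg f (Fin.ext (by have := (f.symm m).2; simp only; omega))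

theorem covByUnder_iff_exists_succ (hf : StrictMono (g ∘ f)) {a b : α} :
    CovByUnder g a b ↔
      ∃ i, ∃ h : i + 1 < n, a = f ⟨i, by omega⟩ ∧ b = f ⟨i + 1, h⟩ := by
  obtain ⟨i, rfl⟩ := f.surjective a
  obtain ⟨j, rfl⟩ := f.surjective b
  simp only [f.injective.eq_iff, Fin.ext_iff]
  constructor
  · rintro ⟨hij, hnext⟩
    have hij : i < j := hf.lt_iff_lt.1 hij
    have hj : (j : ℕ) = i + 1 := by
      by_contra hne
      have hk : (i : ℕ) + 1 < n := by omega
      have : (j : ℕ) ≤ i + 1 :=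
        hf.le_iff_le.1 (hnext (f ⟨i + 1, hk⟩) (hf (Fin.lt_def.2 (by simp))))
      omega
    exact ⟨i, by omega, rfl, hj⟩
  · rintro ⟨k, hk, hik, hjk⟩
    refine ⟨hf (Fin.lt_def.2 (by omega)), fun c hc => ?_⟩
    obtain ⟨l, rfl⟩ := f.surjective c
    have := Fin.lt_def.1 (hf.lt_iff_lt.1 hc)
    exact hf.monotone (Fin.le_def.2 (by omega))

end CovByUnder

namespace TreeToPath

structure IsDepth (r : V) (p : V → V) (d : V → ℕ) : Prop where
  root : d r = 0
  parent : ∀ v, v ≠ r → d v = d (p v) + 1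

section Ancestry

variable [DecidableEq V]

def ancestryAux (r : V) (p : V → V) : ℕ → V → List V
  | 0, _ => []
  | k + 1, v => if v = r then [] else ancestryAux r p k (p v) ++ [v]

/-- The ancestors of `v` strictly below the root, from the top down, ending with `v`. -/
def ancestry (r : V) (p : V → V) (d : V → ℕ) (v : V) : List V :=
  ancestryAux r p (d v) v

variable {r : V} {p : V → V} {d : V → ℕ}

local notation "A" => ancestry r p d

theorem ancestry_root (hT : IsDepth r p d) : A r = [] := by
  rw [ancestry, hT.root]
  rfl

theorem ancestry_of_ne_root (hT : IsDepth r p d) {v : V} (hv : v ≠ r) :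
    A v = A (p v) ++ [v] := by
  rw [ancestry, hT.parent v hv, ancestryAux, if_neg hv]
  rfl

theorem ancestry_injective (hT : IsDepth r p d) : Injective (ancestry r p d) := by
  have ne_nil {v : V} (hv : v ≠ r) : A v ≠ [] := by simp [ancestry_of_ne_root hT hv]
  intro u w h
  by_cases hu : u = r <;> by_cases hw : w = r
  · rw [hu, hw]
  · subst hu
    exact absurd (h.symm.trans (ancestry_root hT)) (ne_nil hw)
  · subst hw
    exact absurd (h.trans (ancestry_root hT)) (ne_nil hu)
  · simpa [ancestry_of_ne_root hT hu, ancestry_of_ne_root hT hw] using congrArg List.getLast? h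

theorem exists_child_prefix_ancestry (hT : IsDepth r p d) {x c : V} (h : A x <+: A c)
    (hne : c ≠ x) : ∃ u, u ≠ r ∧ p u = x ∧ A u <+: A c := by
  induction hk : d c using Nat.strong_induction_on generalizing c with
  | _ k ih =>
    have hc : c ≠ r := by
      rintro rfl
      rw [ancestry_root hT, List.prefix_nil] at h
      exact hne (ancestry_injective hT (h.trans (ancestry_root hT).symm)).symm
    rw [ancestry_of_ne_root hT hc, List.prefix_concat_iff, ← ancestry_of_ne_root hT hc] at h
    rcases h with h | h
    · exact absurd (ancestry_injective hT h).symm hne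
    by_cases hpc : p c = x
    · exact ⟨c, hc, hpc, List.prefix_refl _⟩
    obtain ⟨u, hu, hpu, hpre⟩ := ih _ (by rw [← hk, hT.parent c hc]; omega) h hpc rfl
    exact ⟨u, hu, hpu, hpre.trans ⟨[c], (ancestry_of_ne_root hT hc).symm⟩⟩

end Ancestry

section Key

def embed (c : V) : WithBot (WithTop Vᵒᵈ) :=
  ((OrderDual.toDual c : Vᵒᵈ) : WithTop Vᵒᵈ)

theorem embed_injective : Injective (embed : V → WithBot (WithTop Vᵒᵈ)) := by
  intro c c' h
  simpa [embed] using h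

variable [LinearOrder V]

/-- Lexicographic keys realizing the traversal order: children are visited in decreasing order,
a vertex of odd depth before its descendants (sentinel `⊥`), one of even depth after them
(sentinel `⊤`). -/
def key (r : V) (p : V → V) (d : V → ℕ) (v : V) : List (WithBot (WithTop Vᵒᵈ)) :=
  (ancestry r p d v).map embed ++ [if d v % 2 = 1 then ⊥ else ⊤]

theorem embed_lt_embed {c c' : V} : embed c < embed c' ↔ c' < c := by
  simp [embed]

theorem bot_lt_embed (c : V) : ⊥ < embed c := WithBot.bot_lt_coe _

theorem embed_lt_top (c : V) : embed c < ⊤ := WithBot.coe_lt_coe.2 (WithTop.coe_lt_top _)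

variable {r : V} {p : V → V} {d : V → ℕ}

local notation "A" => ancestry r p d
local notation "K" => key r p d

theorem key_injective (hT : IsDepth r p d) : Injective (key r p d) := by
  intro u w h
  have := (List.append_inj' h rfl).1
  exact ancestry_injective hT (List.map_injective_iff.2 embed_injective this)

theorem exists_key_eq_of_ancestry_eq {s t : List V} {c u : V} (hc : A c = s ++ u :: t) :
    ∃ t', K c = s.map embed ++ embed u :: t' :=
  ⟨t.map embed ++ [if d c % 2 = 1 then ⊥ else ⊤], by simp [key, hc]⟩

theorem key_lt_key_of_lt {s t t' : List V} {x c u w : V} (hx : A x = s ++ u :: t)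
    (hc : A c = s ++ w :: t') (h : w < u) : K x < K c := by
  obtain ⟨tx, hx⟩ := exists_key_eq_of_ancestry_eq hx
  obtain ⟨tc, hc⟩ := exists_key_eq_of_ancestry_eq hc
  rw [hx, hc]
  exact List.append_cons_lt_append_cons _ (embed_lt_embed.2 h) _ _

theorem exists_key_eq_of_prefix (hT : IsDepth r p d) {x c : V} (h : A x <+: A c) (hne : c ≠ x) :
    ∃ u t, K c = (A x).map embed ++ embed u :: t := by
  obtain ⟨u, hu, rfl, t, ht⟩ := exists_child_prefix_ancestry hT h hne
  refine ⟨u, exists_key_eq_of_ancestry_eq (t := t) ?_⟩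
  rw [← ht, ancestry_of_ne_root hT hu, List.append_assoc, List.singleton_append]

theorem key_lt_key_of_odd (hT : IsDepth r p d) {x c : V} (hx : d x % 2 = 1) (h : A x <+: A c)
    (hne : c ≠ x) : K x < K c := by
  obtain ⟨u, t, hc⟩ := exists_key_eq_of_prefix hT h hne
  rw [hc, key, if_pos hx]
  exact List.append_cons_lt_append_cons _ (bot_lt_embed u) _ _

theorem key_lt_key_of_even (hT : IsDepth r p d) {x c : V} (hx : d x % 2 = 0) (h : A x <+: A c)
    (hne : c ≠ x) : K c < K x := by
  obtain ⟨u, t, hc⟩ := exists_key_eq_of_prefix hT h hne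
  rw [hc, key, if_neg (by omega)]
  exact List.append_cons_lt_append_cons _ (embed_lt_top u) _ _

theorem key_le_key_of_odd (hT : IsDepth r p d) {x c : V} (hx : d x % 2 = 1) (h : A x <+: A c) :
    K x ≤ K c := by
  rcases eq_or_ne c x with rfl | hne
  · exact le_rfl
  · exact (key_lt_key_of_odd hT hx h hne).le

theorem key_le_key_of_even (hT : IsDepth r p d) {x c : V} (hx : d x % 2 = 0) (h : A x <+: A c) :
    K c ≤ K x := by
  rcases eq_or_ne c x with rfl | hne
  · exact le_rfl
  · exact (key_lt_key_of_even hT hx h hne).le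

theorem prefix_ancestry_of_key_lt_of_lt {x c₁ c c₂ : V} (h₁ : A x <+: A c₁)
    (h₂ : A x <+: A c₂) (hc₁ : K c₁ < K c) (hc₂ : K c < K c₂) : A x <+: A c := by
  have hK {y : V} (hy : A x <+: A y) : (A x).map embed <+: K y := (hy.map embed).trans ⟨_, rfl⟩
  have hP := (hK h₁).of_lt_of_lt (hK h₂) hc₁ hc₂
  rw [key, List.prefix_concat_iff] at hP
  rcases hP with hP | hP
  · have hmem := hP ▸ List.mem_append_right _ (List.mem_singleton_self _)
    obtain ⟨y, -, hy⟩ := List.mem_map.1 hmem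
    split_ifs at hy
    exacts [absurd hy (bot_lt_embed y).ne', absurd hy (embed_lt_top y).ne]
  · obtain ⟨l, hl, hmap⟩ := List.prefix_map_iff.1 hP
    rwa [List.map_injective_iff.2 embed_injective hmap]

theorem covByUnder_key_of_prefix {x a b : V} (ha : A x <+: A a) (hb : A x <+: A b)
    (hab : K a < K b) (h : ∀ c, A x <+: A c → K c ≤ K a ∨ K b ≤ K c) : CovByUnder K a b :=
  ⟨hab, fun c hac => by
    by_contra! hcb
    rcases h c (prefix_ancestry_of_key_lt_of_lt ha hb hac hcb) with h | h
    exacts [absurd h (not_le.2 hac), absurd h (not_le.2 hcb)]⟩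

end Key

section Children

variable [Fintype V] [LinearOrder V] {r : V} {p : V → V} {d : V → ℕ}

local notation "A" => ancestry r p d
local notation "K" => key r p d
local notation "C" => t2pChild r p

theorem mem_t2pChild {u x : V} : u ∈ C x ↔ u ≠ r ∧ p u = x := by
  simp [t2pChild]

theorem mem_t2pRSib {w v : V} : w ∈ t2pRSib r p v ↔ w ∈ C (p v) ∧ v < w :=
  Finset.mem_filter

theorem mem_t2pLSib {w v : V} : w ∈ t2pLSib r p v ↔ w ∈ C (p v) ∧ w < v :=
  Finset.mem_filter

theorem ancestry_of_mem_t2pChild (hT : IsDepth r p d) {u x : V} (hu : u ∈ C x) :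
    A u = A x ++ [u] := by
  obtain ⟨hur, rfl⟩ := mem_t2pChild.1 hu
  exact ancestry_of_ne_root hT hur

theorem prefix_ancestry_of_mem_t2pChild (hT : IsDepth r p d) {u x : V} (hu : u ∈ C x) :
    A x <+: A u :=
  ⟨[u], (ancestry_of_mem_t2pChild hT hu).symm⟩

theorem depth_of_mem_t2pChild (hT : IsDepth r p d) {u x : V} (hu : u ∈ C x) : d u = d x + 1 := by
  obtain ⟨hur, rfl⟩ := mem_t2pChild.1 hu
  exact hT.parent u hur

theorem ne_of_mem_t2pChild_of_prefix (hT : IsDepth r p d) {u x c : V} (hu : u ∈ C x)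
    (hc : A u <+: A c) : c ≠ x := by
  rintro rfl
  simpa [ancestry_of_mem_t2pChild hT hu] using hc.length_le

theorem eq_or_exists_mem_t2pChild_prefix (hT : IsDepth r p d) {x c : V} (h : A x <+: A c) :
    c = x ∨ ∃ u ∈ C x, A u <+: A c := by
  refine or_iff_not_imp_left.2 fun hne => ?_
  obtain ⟨u, hur, hpu, hpre⟩ := exists_child_prefix_ancestry hT h hne
  exact ⟨u, mem_t2pChild.2 ⟨hur, hpu⟩, hpre⟩

theorem key_lt_key_of_lt_of_mem_t2pChild (hT : IsDepth r p d) {x u w c c' : V} (hu : u ∈ C x)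
    (hw : w ∈ C x) (hwu : w < u) (hc : A u <+: A c) (hc' : A w <+: A c') : K c < K c' := by
  obtain ⟨t, ht⟩ := hc
  obtain ⟨t', ht'⟩ := hc'
  refine key_lt_key_of_lt (s := A x) (t := t) (t' := t') ?_ ?_ hwu
  · rw [← ht, ancestry_of_mem_t2pChild hT hu, List.append_assoc, List.singleton_append]
  · rw [← ht', ancestry_of_mem_t2pChild hT hw, List.append_assoc, List.singleton_append]

variable (r p) in
def maxChildOrSelf (x : V) : V :=
  if h : (C x).Nonempty then (C x).max' h else x

variable (r p) in
def minChildOrSelf (x : V) : V :=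
  if h : (C x).Nonempty then (C x).min' h else x

theorem prefix_maxChildOrSelf (hT : IsDepth r p d) (x : V) : A x <+: A (maxChildOrSelf r p x) := by
  unfold maxChildOrSelf
  split_ifs with h
  · exact prefix_ancestry_of_mem_t2pChild hT (Finset.max'_mem _ h)
  · exact List.prefix_refl _

theorem prefix_minChildOrSelf (hT : IsDepth r p d) (x : V) : A x <+: A (minChildOrSelf r p x) := by
  unfold minChildOrSelf
  split_ifs with h
  · exact prefix_ancestry_of_mem_t2pChild hT (Finset.min'_mem _ h)
  · exact List.prefix_refl _

theorem key_maxChildOrSelf_le (hT : IsDepth r p d) {x c : V} (hx : d x % 2 = 0)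
    (hc : A x <+: A c) : K (maxChildOrSelf r p x) ≤ K c := by
  unfold maxChildOrSelf
  split_ifs with h
  · have hm := Finset.max'_mem _ h
    rcases eq_or_exists_mem_t2pChild_prefix hT hc with rfl | ⟨u, hu, huc⟩
    · exact (key_lt_key_of_even hT hx (prefix_ancestry_of_mem_t2pChild hT hm)
        (ne_of_mem_t2pChild_of_prefix hT hm (List.prefix_refl _))).le
    · rcases (Finset.le_max' _ u hu).eq_or_lt with he | hlt
      · rw [← he]
        exact key_le_key_of_odd hT (by rw [depth_of_mem_t2pChild hT hu]; omega) huc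
      · exact (key_lt_key_of_lt_of_mem_t2pChild hT hm hu hlt (List.prefix_refl _) huc).le
  · rcases eq_or_exists_mem_t2pChild_prefix hT hc with rfl | ⟨u, hu, -⟩
    · exact le_rfl
    · exact absurd ⟨u, hu⟩ h

theorem key_le_minChildOrSelf (hT : IsDepth r p d) {x c : V} (hx : d x % 2 = 1)
    (hc : A x <+: A c) : K c ≤ K (minChildOrSelf r p x) := by
  unfold minChildOrSelf
  split_ifs with h
  · have hm := Finset.min'_mem _ h
    rcases eq_or_exists_mem_t2pChild_prefix hT hc with rfl | ⟨u, hu, huc⟩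
    · exact (key_lt_key_of_odd hT hx (prefix_ancestry_of_mem_t2pChild hT hm)
        (ne_of_mem_t2pChild_of_prefix hT hm (List.prefix_refl _))).le
    · rcases (Finset.min'_le _ u hu).eq_or_lt with he | hlt
      · rw [he]
        exact key_le_key_of_even hT (by rw [depth_of_mem_t2pChild hT hu]; omega) huc
      · exact (key_lt_key_of_lt_of_mem_t2pChild hT hu hm hlt huc (List.prefix_refl _)).le
  · rcases eq_or_exists_mem_t2pChild_prefix hT hc with rfl | ⟨u, hu, -⟩
    · exact le_rfl
    · exact absurd ⟨u, hu⟩ h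

theorem covByUnder_key_of_adjacent_children (hT : IsDepth r p d) {x u w a b : V}
    (hu : u ∈ C x) (hw : w ∈ C x) (hwu : w < u) (hadj : ∀ y ∈ C x, y < u → y ≤ w)
    (ha : A u <+: A a) (haG : ∀ c, A u <+: A c → K c ≤ K a)
    (hb : A w <+: A b) (hbL : ∀ c, A w <+: A c → K b ≤ K c) : CovByUnder K a b := by
  have hxa := (prefix_ancestry_of_mem_t2pChild hT hu).trans ha
  have hxb := (prefix_ancestry_of_mem_t2pChild hT hw).trans hb
  refine covByUnder_key_of_prefix hxa hxb
    (key_lt_key_of_lt_of_mem_t2pChild hT hu hw hwu ha hb) fun c hc => ?_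
  rcases eq_or_exists_mem_t2pChild_prefix hT hc with rfl | ⟨y, hy, hyc⟩
  · rcases Nat.mod_two_eq_zero_or_one (d c) with hx | hx
    · exact Or.inr (key_le_key_of_even hT hx hxb)
    · exact Or.inl (key_le_key_of_odd hT hx hxa)
  · rcases lt_trichotomy y u with hyu | rfl | huy
    · rcases (hadj y hy hyu).eq_or_lt with rfl | hyw
      · exact Or.inr (hbL c hyc)
      · exact Or.inr (key_lt_key_of_lt_of_mem_t2pChild hT hw hy hyw hb hyc).le
    · exact Or.inl (haG c hyc)
    · exact Or.inl (key_lt_key_of_lt_of_mem_t2pChild hT hy hu huy hyc ha).le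

theorem covByUnder_key_of_odd_parent (hT : IsDepth r p d) {x u b : V} (hx : d x % 2 = 1)
    (hu : u ∈ C x) (humax : ∀ y ∈ C x, y ≤ u)
    (hb : A u <+: A b) (hbL : ∀ c, A u <+: A c → K b ≤ K c) : CovByUnder K x b := by
  have hxb := (prefix_ancestry_of_mem_t2pChild hT hu).trans hb
  refine covByUnder_key_of_prefix (List.prefix_refl _) hxb
    (key_lt_key_of_odd hT hx hxb (ne_of_mem_t2pChild_of_prefix hT hu hb)) fun c hc => ?_
  rcases eq_or_exists_mem_t2pChild_prefix hT hc with rfl | ⟨y, hy, hyc⟩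
  · exact Or.inl le_rfl
  · rcases (humax y hy).eq_or_lt with rfl | hyu
    · exact Or.inr (hbL c hyc)
    · exact Or.inr (key_lt_key_of_lt_of_mem_t2pChild hT hu hy hyu hb hyc).le

theorem covByUnder_key_of_even_parent (hT : IsDepth r p d) {x w a : V} (hx : d x % 2 = 0)
    (hw : w ∈ C x) (hwmin : ∀ y ∈ C x, w ≤ y)
    (ha : A w <+: A a) (haG : ∀ c, A w <+: A c → K c ≤ K a) : CovByUnder K a x := by
  have hxa := (prefix_ancestry_of_mem_t2pChild hT hw).trans ha
  refine covByUnder_key_of_prefix hxa (List.prefix_refl _)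
    (key_lt_key_of_even hT hx hxa (ne_of_mem_t2pChild_of_prefix hT hw ha)) fun c hc => ?_
  rcases eq_or_exists_mem_t2pChild_prefix hT hc with rfl | ⟨y, hy, hyc⟩
  · exact Or.inr le_rfl
  · rcases (hwmin y hy).eq_or_lt with rfl | hwy
    · exact Or.inl (haG c hyc)
    · exact Or.inl (key_lt_key_of_lt_of_mem_t2pChild hT hy hw hwy hyc ha).le

theorem t2pEdge_of_even {v : V} (hv : d v % 2 = 0) :
    t2pEdge r p (fun w => 1 + d w) v =
      (if h : (t2pRSib r p v).Nonempty then (t2pRSib r p v).min' h else p v,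
        maxChildOrSelf r p v) := by
  rw [t2pEdge, if_pos (by omega)]
  rfl

theorem t2pEdge_of_odd {v : V} (hv : d v % 2 = 1) :
    t2pEdge r p (fun w => 1 + d w) v =
      (minChildOrSelf r p v,
        if h : (t2pLSib r p v).Nonempty then (t2pLSib r p v).max' h else p v) := by
  rw [t2pEdge, if_neg (by omega)]
  rfl

theorem covByUnder_t2pEdge_of_even (hT : IsDepth r p d) {v : V} (hv : v ≠ r) (hev : d v % 2 = 0) :
    CovByUnder K (t2pEdge r p (fun w => 1 + d w) v).1 (t2pEdge r p (fun w => 1 + d w) v).2 := by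
  have hvc : v ∈ C (p v) := mem_t2pChild.2 ⟨hv, rfl⟩
  have hbL (c : V) : A v <+: A c → K (maxChildOrSelf r p v) ≤ K c :=
    key_maxChildOrSelf_le hT hev
  rw [t2pEdge_of_even hev]
  dsimp only
  split_ifs with h
  · obtain ⟨hwc, hvw⟩ := mem_t2pRSib.1 (Finset.min'_mem _ h)
    have hadj (y : V) (hy : y ∈ C (p v)) (hyw : y < (t2pRSib r p v).min' h) : y ≤ v :=
      not_lt.1 fun hvy => not_le.2 hyw (Finset.min'_le _ y (mem_t2pRSib.2 ⟨hy, hvy⟩))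
    have hw : d ((t2pRSib r p v).min' h) % 2 = 0 := by
      rw [depth_of_mem_t2pChild hT hwc, ← hT.parent v hv, hev]
    exact covByUnder_key_of_adjacent_children hT hwc hvc hvw hadj (List.prefix_refl _)
      (fun c hc => key_le_key_of_even hT hw hc) (prefix_maxChildOrSelf hT v) hbL
  · have hvmax (y : V) (hy : y ∈ C (p v)) : y ≤ v :=
      not_lt.1 fun hvy => h ⟨y, mem_t2pRSib.2 ⟨hy, hvy⟩⟩
    exact covByUnder_key_of_odd_parent hT (by have := hT.parent v hv; omega) hvc hvmax
      (prefix_maxChildOrSelf hT v) hbL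

theorem covByUnder_t2pEdge_of_odd (hT : IsDepth r p d) {v : V} (hv : v ≠ r) (hodd : d v % 2 = 1) :
    CovByUnder K (t2pEdge r p (fun w => 1 + d w) v).1 (t2pEdge r p (fun w => 1 + d w) v).2 := by
  have hvc : v ∈ C (p v) := mem_t2pChild.2 ⟨hv, rfl⟩
  have haG (c : V) : A v <+: A c → K c ≤ K (minChildOrSelf r p v) :=
    key_le_minChildOrSelf hT hodd
  rw [t2pEdge_of_odd hodd]
  dsimp only
  split_ifs with h
  · obtain ⟨hwc, hwv⟩ := mem_t2pLSib.1 (Finset.max'_mem _ h)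
    have hadj (y : V) (hy : y ∈ C (p v)) (hyv : y < v) : y ≤ (t2pLSib r p v).max' h :=
      Finset.le_max' _ y (mem_t2pLSib.2 ⟨hy, hyv⟩)
    have hw : d ((t2pLSib r p v).max' h) % 2 = 1 := by
      rw [depth_of_mem_t2pChild hT hwc, ← hT.parent v hv, hodd]
    exact covByUnder_key_of_adjacent_children hT hvc hwc hwv hadj (prefix_minChildOrSelf hT v)
      haG (List.prefix_refl _) (fun c hc => key_le_key_of_odd hT hw hc)
  · have hvmin (y : V) (hy : y ∈ C (p v)) : v ≤ y :=
      not_lt.1 fun hyv => h ⟨y, mem_t2pLSib.2 ⟨hy, hyv⟩⟩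
    exact covByUnder_key_of_even_parent hT (by have := hT.parent v hv; omega) hvc hvmin
      (prefix_minChildOrSelf hT v) haG

theorem covByUnder_t2pEdge (hT : IsDepth r p d) {v : V} (hv : v ≠ r) :
    CovByUnder K (t2pEdge r p (fun w => 1 + d w) v).1 (t2pEdge r p (fun w => 1 + d w) v).2 := by
  rcases Nat.mod_two_eq_zero_or_one (d v) with h | h
  exacts [covByUnder_t2pEdge_of_even hT hv h, covByUnder_t2pEdge_of_odd hT hv h]

theorem exists_t2pEdge_fst_eq_of_odd (hT : IsDepth r p d) {a : V} (hodd : d a % 2 = 1) :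
    ∃ v, v ≠ r ∧ (t2pEdge r p (fun w => 1 + d w) v).1 = a := by
  by_cases h : (C a).Nonempty
  · have hm := Finset.max'_mem _ h
    obtain ⟨hmr, hpm⟩ := mem_t2pChild.1 hm
    have hrs : ¬(t2pRSib r p ((C a).max' h)).Nonempty := by
      rintro ⟨y, hy⟩
      rw [mem_t2pRSib, hpm] at hy
      exact not_le.2 hy.2 (Finset.le_max' _ y hy.1)
    refine ⟨_, hmr, ?_⟩
    rw [t2pEdge_of_even (by rw [depth_of_mem_t2pChild hT hm]; omega)]
    exact (dif_neg hrs).trans hpm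
  · refine ⟨a, fun har => by simp [har, hT.root] at hodd, ?_⟩
    rw [t2pEdge_of_odd hodd]
    exact dif_neg h

theorem exists_t2pEdge_fst_eq_of_even (hT : IsDepth r p d) {a : V} (ha : a ≠ r)
    (hev : d a % 2 = 0) : ∃ v, v ≠ r ∧ (t2pEdge r p (fun w => 1 + d w) v).1 = a := by
  have hac : a ∈ C (p a) := mem_t2pChild.2 ⟨ha, rfl⟩
  have hpa : d (p a) % 2 = 1 := by have := hT.parent a ha; omega
  by_cases h : (t2pLSib r p a).Nonempty
  · obtain ⟨hwc, hwa⟩ := mem_t2pLSib.1 (Finset.max'_mem _ h)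
    obtain ⟨hwr, hpw⟩ := mem_t2pChild.1 hwc
    have haR : a ∈ t2pRSib r p ((t2pLSib r p a).max' h) := mem_t2pRSib.2 ⟨hpw ▸ hac, hwa⟩
    have hrs : (t2pRSib r p ((t2pLSib r p a).max' h)).Nonempty := ⟨a, haR⟩
    refine ⟨_, hwr, ?_⟩
    rw [t2pEdge_of_even (by rw [depth_of_mem_t2pChild hT hwc]; omega)]
    refine (dif_pos hrs).trans ?_
    refine le_antisymm (Finset.min'_le _ a haR) (Finset.le_min' _ _ _ fun y hy => ?_)
    obtain ⟨hyc, hwy⟩ := mem_t2pRSib.1 hy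
    exact not_lt.1 fun hya =>
      not_le.2 hwy (Finset.le_max' _ y (mem_t2pLSib.2 ⟨hpw ▸ hyc, hya⟩))
  · refine ⟨p a, fun hpr => by simp [hpr, hT.root] at hpa, ?_⟩
    rw [t2pEdge_of_odd hpa]
    refine (dif_pos ⟨a, hac⟩).trans (le_antisymm (Finset.min'_le _ a hac) ?_)
    exact Finset.le_min' _ _ _ fun y hy =>
      not_lt.1 fun hya => h ⟨y, mem_t2pLSib.2 ⟨hy, hya⟩⟩

theorem exists_t2pEdge_fst_eq (hT : IsDepth r p d) {a : V} (ha : a ≠ r) :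
    ∃ v, v ≠ r ∧ (t2pEdge r p (fun w => 1 + d w) v).1 = a := by
  rcases Nat.mod_two_eq_zero_or_one (d a) with h | h
  exacts [exists_t2pEdge_fst_eq_of_even hT ha h, exists_t2pEdge_fst_eq_of_odd hT h]

theorem nonempty_t2pChild_root (hT : IsDepth r p d) (hcard : 2 ≤ Fintype.card V) :
    (C r).Nonempty := by
  obtain ⟨v, hv⟩ := Fintype.exists_ne_of_one_lt_card hcard r
  obtain ⟨u, hu, hpu, -⟩ := exists_child_prefix_ancestry hT (by simp [ancestry_root hT]) hv
  exact ⟨u, mem_t2pChild.2 ⟨hu, hpu⟩⟩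

end Children

end TreeToPath

open TreeToPath

/-- **Tree-to-Path, root label 1.** With labels `l v = (1 + d v) % 2`, so `l r = 1`,
the Tree-to-Path algorithm outputs a directed Hamiltonian path beginning at the maximum
child of `r` and ending at `r`. -/
theorem tree_to_path_root_label_one [Fintype V] [LinearOrder V]
    (r : V) (p : V → V) (d : V → ℕ)
    (hcard : 2 ≤ Fintype.card V)
    (hdr : d r = 0)
    (hd : ∀ v, v ≠ r → d v = d (p v) + 1) :
    ∃ f : Fin (Fintype.card V) ≃ V,
      IsGreatest (↑(t2pChild r p r) : Set V) (f ⟨0, by omega⟩) ∧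
      f ⟨Fintype.card V - 1, by omega⟩ = r ∧
      ∀ a b : V,
        ((a, b) ∈ (Finset.univ.filter (fun v => v ≠ r)).image
            (t2pEdge r p (fun v => 1 + d v))) ↔
          ∃ i : ℕ, ∃ h : i + 1 < Fintype.card V,
            a = f ⟨i, by omega⟩ ∧ b = f ⟨i + 1, h⟩ := by
  have hT : IsDepth r p d := ⟨hdr, hd⟩
  have hprefix (c : V) : ancestry r p d r <+: ancestry r p d c := by simp [ancestry_root hT]
  have hkey_le_root (c : V) : key r p d c ≤ key r p d r :=
    key_le_key_of_even hT (by rw [hdr]) (hprefix c)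
  obtain ⟨f, hf⟩ := exists_equiv_fin_strictMono_comp (key_injective hT)
  have hroot := nonempty_t2pChild_root hT hcard
  have hfirst : f ⟨0, by omega⟩ = (t2pChild r p r).max' hroot :=
    f.apply_zero_eq_of_forall_le hf _ fun c => by
      simpa [maxChildOrSelf, hroot] using key_maxChildOrSelf_le hT (by rw [hdr]) (hprefix c)
  refine ⟨f, hfirst ▸ Finset.isGreatest_max' _ hroot,
    f.apply_last_eq_of_forall_le hf _ hkey_le_root, fun a b => ?_⟩
  rw [← covByUnder_iff_exists_succ f hf, Finset.mem_image]
  constructor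
  · rintro ⟨v, hv, hvab⟩
    simpa [hvab] using covByUnder_t2pEdge hT (Finset.mem_filter.1 hv).2
  · intro hab
    have ha : a ≠ r := fun h => absurd (hkey_le_root b) (not_le.2 (h ▸ hab.1))
    obtain ⟨v, hv, hva⟩ := exists_t2pEdge_fst_eq hT ha
    refine ⟨v, Finset.mem_filter.2 ⟨Finset.mem_univ v, hv⟩, Prod.ext hva ?_⟩
    exact (hva ▸ covByUnder_t2pEdge hT hv).right_unique (key_injective hT) hab
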